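/- Under the noisy-data setup (true system in difference-operator form with l at least its lag, data consistent with some noise V* ∈ 𝒱, Q ≺ 0, and the matrix [[Q̄, S̄],[S̄ᵀ, R̄]] invertible): if there exist a symmetric P ∈ ℝ^{2ml×2ml} (not necessarily positive semidefinite) and μ ≥ 0 such that Gᵀ·diag(−P, P, −γ²I_m, I_m)·G − μ·[[Q̃, S̃],[S̃ᵀ, R̃]] ⪯ 0, then Γ(T) ≤ γ; similarly, if there exist symmetric P and μ ≥ 0 with Gᵀ·diag(−P, P, ζ²I_m, −I_m)·G − μ·[[Q̃, S̃],[S̃ᵀ, R̃]] ⪯ 0, then γ₋(T) ≥ ζ, where T is the input-output operator of the true noise-free system on dom(T) = { u ∈ ℓ₂^m : y ∈ ℓ₂^m }. -/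

import Mathlib

open scoped ENNReal
open Filter Matrix Topology

noncomputable section

abbrev Evec (m : ℕ) := EuclideanSpace ℂ (Fin m)

/-- Action of a real matrix on a complex Euclidean vector. -/
noncomputable def act {a b : ℕ} (M : Matrix (Fin a) (Fin b) ℝ) (v : Evec b) : Evec a :=
  Matrix.toEuclideanLin (M.map Complex.ofReal) v

/-- Output of the discrete-time system with zero initial state. -/
noncomputable def output {n m : ℕ} (A : Matrix (Fin n) (Fin n) ℝ) (B : Matrix (Fin n) (Fin m) ℝ)
    (C : Matrix (Fin m) (Fin n) ℝ) (D : Matrix (Fin m) (Fin m) ℝ)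
    (u : ℕ → Evec m) (k : ℕ) : Evec m :=
  act D (u k) + ∑ i ∈ Finset.range k, act (C * A ^ (k - 1 - i) * B) (u i)

/-- ℓ₂ norm of a sequence, valued in [0,∞]. -/
noncomputable def enorm2 {m : ℕ} (f : ℕ → Evec m) : ℝ≥0∞ :=
  (∑' k, (‖f k‖₊ : ℝ≥0∞) ^ 2) ^ (1/2 : ℝ)

noncomputable def norm2 {m : ℕ} (f : ℕ → Evec m) : ℝ := (enorm2 f).toReal

noncomputable def inner2 {m : ℕ} (f g : ℕ → Evec m) : ℂ := ∑' k, (inner ℂ (f k) (g k) : ℂ)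

noncomputable def sangle {m : ℕ} (u y : ℕ → Evec m) : ℝ :=
  open scoped Classical in
  if y = 0 then 0 else Real.arccos ((inner2 y u).re / (norm2 y * norm2 u))

noncomputable def srg {m : ℕ} (dom : Set (ℕ → Evec m))
    (T : (ℕ → Evec m) → (ℕ → Evec m)) : Set ℂ :=
  {w | ∃ u ∈ dom, u ≠ 0 ∧
    (w = ((norm2 (T u) / norm2 u : ℝ) : ℂ) * Complex.exp ((sangle u (T u) : ℂ) * Complex.I) ∨
     w = ((norm2 (T u) / norm2 u : ℝ) : ℂ) * Complex.exp (-(sangle u (T u) : ℂ) * Complex.I))}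

noncomputable def maxGain {m : ℕ} (dom : Set (ℕ → Evec m))
    (T : (ℕ → Evec m) → (ℕ → Evec m)) : ℝ≥0∞ :=
  ⨆ u ∈ {v ∈ dom | v ≠ 0}, enorm2 (T u) / enorm2 u

noncomputable def minGain {m : ℕ} (dom : Set (ℕ → Evec m))
    (T : (ℕ → Evec m) → (ℕ → Evec m)) : ℝ≥0∞ :=
  ⨅ u ∈ {v ∈ dom | v ≠ 0}, enorm2 (T u) / enorm2 u

/-- The subspace ℓ_{2,τ}: sequences vanishing strictly after time τ. -/
def ltwoTau (m τ : ℕ) : Set (ℕ → Evec m) := {u | ∀ k, τ < k → u k = 0}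

/-- The truncated operator T^τ. -/
noncomputable def TtauMap {n m : ℕ} (A : Matrix (Fin n) (Fin n) ℝ) (B : Matrix (Fin n) (Fin m) ℝ)
    (C : Matrix (Fin m) (Fin n) ℝ) (D : Matrix (Fin m) (Fin m) ℝ) (τ : ℕ)
    (u : ℕ → Evec m) (k : ℕ) : Evec m :=
  if k ≤ τ then output A B C D u k else 0

/-- Domain of the ℓ₂ operator T. -/
def domInf {n m : ℕ} (A : Matrix (Fin n) (Fin n) ℝ) (B : Matrix (Fin n) (Fin m) ℝ)
    (C : Matrix (Fin m) (Fin n) ℝ) (D : Matrix (Fin m) (Fin m) ℝ) : Set (ℕ → Evec m) :=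
  {u | enorm2 u ≠ ⊤ ∧ enorm2 (output A B C D u) ≠ ⊤}

/-- Limit of a sequence of subsets of a topological space. -/
def setLimit {X : Type*} [TopologicalSpace X] (S : ℕ → Set X) : Set X :=
  {x | ∃ z : ℕ → X, (∀ τ, z τ ∈ S τ) ∧ Tendsto z atTop (𝓝 x)}

/-- The (possibly unbounded) annulus centred at α with radii lo ≤ hi, as a subset of Ĉ. -/
def annulus (α : ℝ) (lo hi : ℝ≥0∞) : Set (OnePoint ℂ) :=
  {w | (w = OnePoint.infty ∧ hi = ⊤) ∨
    ∃ z : ℂ, w = (((α : ℂ) + z : ℂ) : OnePoint ℂ) ∧ lo ≤ (‖z‖₊ : ℝ≥0∞) ∧ (‖z‖₊ : ℝ≥0∞) ≤ hi}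




/-- A real matrix is negative semidefinite: symmetric and xᵀMx ≤ 0 for all x. -/
def IsNegSemidef {k : Type*} [Fintype k] (M : Matrix k k ℝ) : Prop :=
  M.IsSymm ∧ ∀ x : k → ℝ, x ⬝ᵥ M.mulVec x ≤ 0

/-- A real matrix is positive semidefinite: symmetric and xᵀMx ≥ 0 for all x. -/
def IsPosSemidefR {k : Type*} [Fintype k] (M : Matrix k k ℝ) : Prop :=
  M.IsSymm ∧ ∀ x : k → ℝ, 0 ≤ x ⬝ᵥ M.mulVec x

/-- A real matrix is negative definite. -/
def IsNegDef {k : Type*} [Fintype k] (M : Matrix k k ℝ) : Prop :=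
  M.IsSymm ∧ ∀ x : k → ℝ, x ≠ 0 → x ⬝ᵥ M.mulVec x < 0

/-- (A,B) is controllable: the controllability matrix has full rank n. -/
def Controllable {n m : ℕ} (A : Matrix (Fin n) (Fin n) ℝ) (B : Matrix (Fin n) (Fin m) ℝ) : Prop :=
  (Matrix.of fun i (p : Fin n × Fin m) => (A ^ (p.1 : ℕ) * B) i p.2).rank = n

/-- The observability matrix of depth l (rows C, CA, …, CA^{l-1}). -/
def obsMat {n m : ℕ} (A : Matrix (Fin n) (Fin n) ℝ) (C : Matrix (Fin m) (Fin n) ℝ) (l : ℕ) :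
    Matrix (Fin l × Fin m) (Fin n) ℝ :=
  Matrix.of fun p j => (C * A ^ (p.1 : ℕ)) p.2 j

/-- (A,C) is observable: the depth-n observability matrix has full rank n. -/
def Observable {n m : ℕ} (A : Matrix (Fin n) (Fin n) ℝ) (C : Matrix (Fin m) (Fin n) ℝ) : Prop :=
  (obsMat A C n).rank = n

/-- The lag of the system: smallest l ≥ 1 with full-rank observability matrix of depth l. -/
noncomputable def lag {n m : ℕ} (A : Matrix (Fin n) (Fin n) ℝ) (C : Matrix (Fin m) (Fin n) ℝ) : ℕ :=
  sInf {l | 1 ≤ l ∧ (obsMat A C l).rank = n}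

/-- The LMI matrix for the maximum gain. -/
def lmiMax {n m : ℕ} (A : Matrix (Fin n) (Fin n) ℝ) (B : Matrix (Fin n) (Fin m) ℝ)
    (C : Matrix (Fin m) (Fin n) ℝ) (D : Matrix (Fin m) (Fin m) ℝ)
    (P : Matrix (Fin n) (Fin n) ℝ) (γ : ℝ) : Matrix (Fin n ⊕ Fin m) (Fin n ⊕ Fin m) ℝ :=
  Matrix.fromBlocks (Aᵀ * P * A - P + Cᵀ * C) (Aᵀ * P * B + Cᵀ * D)
    (Bᵀ * P * A + Dᵀ * C) (Bᵀ * P * B + Dᵀ * D - γ ^ 2 • (1 : Matrix (Fin m) (Fin m) ℝ))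

/-- The LMI matrix for the minimum gain. -/
def lmiMin {n m : ℕ} (A : Matrix (Fin n) (Fin n) ℝ) (B : Matrix (Fin n) (Fin m) ℝ)
    (C : Matrix (Fin m) (Fin n) ℝ) (D : Matrix (Fin m) (Fin m) ℝ)
    (P : Matrix (Fin n) (Fin n) ℝ) (ζ : ℝ) : Matrix (Fin n ⊕ Fin m) (Fin n ⊕ Fin m) ℝ :=
  Matrix.fromBlocks (Aᵀ * P * A - P - Cᵀ * C) (Aᵀ * P * B - Cᵀ * D)
    (Bᵀ * P * A - Dᵀ * C) (Bᵀ * P * B - Dᵀ * D + ζ ^ 2 • (1 : Matrix (Fin m) (Fin m) ℝ))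

/-- Persistency of excitation of order L of the input data (u_k)_{k=0}^{N-1}. -/
def PersistentlyExciting (m N L : ℕ) (u : ℕ → Fin m → ℝ) : Prop :=
  (Matrix.of fun (p : Fin L × Fin m) (j : Fin (N - L + 1)) => u ((p.1 : ℕ) + (j : ℕ)) p.2).rank
    = m * L

/-- (u,y) is an input-output trajectory of (A,B,C,D) of length N. -/
def IsTrajectory {n m : ℕ} (A : Matrix (Fin n) (Fin n) ℝ) (B : Matrix (Fin n) (Fin m) ℝ)
    (C : Matrix (Fin m) (Fin n) ℝ) (D : Matrix (Fin m) (Fin m) ℝ) (N : ℕ)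
    (u y : ℕ → Fin m → ℝ) : Prop :=
  ∃ x : ℕ → Fin n → ℝ, ∀ k < N,
    x (k + 1) = A.mulVec (x k) + B.mulVec (u k) ∧ y k = C.mulVec (x k) + D.mulVec (u k)

/-- Index type for the extended state ξ (u-block followed by y-block). -/
abbrev rindex (l m : ℕ) := (Fin l × Fin m) ⊕ (Fin l × Fin m)

/-- The extended state ξ_k = (u_{k-l}, …, u_{k-1}, y_{k-l}, …, y_{k-1}). -/
def xi {m : ℕ} (l : ℕ) (u y : ℕ → Fin m → ℝ) (k : ℕ) : rindex l m → ℝ :=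
  Sum.elim (fun p => u (k - l + (p.1 : ℕ)) p.2) (fun p => y (k - l + (p.1 : ℕ)) p.2)

def XiMat {m : ℕ} (l N : ℕ) (u y : ℕ → Fin m → ℝ) : Matrix (rindex l m) (Fin (N - l)) ℝ :=
  Matrix.of fun r j => xi l u y (l + (j : ℕ)) r

def XiPlus {m : ℕ} (l N : ℕ) (u y : ℕ → Fin m → ℝ) : Matrix (rindex l m) (Fin (N - l)) ℝ :=
  Matrix.of fun r j => xi l u y (l + 1 + (j : ℕ)) r

def UXi (m l N : ℕ) (u : ℕ → Fin m → ℝ) : Matrix (Fin m) (Fin (N - l)) ℝ :=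
  Matrix.of fun a j => u (l + (j : ℕ)) a

/-- Membership of a noise matrix V in the noise set 𝒱. -/
def inNoiseSet {r mv : ℕ} (Q : Matrix (Fin r) (Fin r) ℝ) (S : Matrix (Fin r) (Fin mv) ℝ)
    (R : Matrix (Fin mv) (Fin mv) ℝ) (V : Matrix (Fin mv) (Fin r) ℝ) : Prop :=
  IsPosSemidefR ((Matrix.fromRows Vᵀ (1 : Matrix (Fin mv) (Fin mv) ℝ))ᵀ
    * Matrix.fromBlocks Q S Sᵀ R * Matrix.fromRows Vᵀ (1 : Matrix (Fin mv) (Fin mv) ℝ))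

/-- The data matrix M = [[(Ξ; U_Ξ), 0], [Y_Ξ, I]]. -/
def Mdata {m : ℕ} (l N : ℕ) (u y : ℕ → Fin m → ℝ) :
    Matrix ((rindex l m ⊕ Fin m) ⊕ Fin m) (Fin (N - l) ⊕ Fin m) ℝ :=
  Matrix.fromBlocks (Matrix.fromRows (XiMat l N u y) (UXi m l N u)) 0 (UXi m l N y) 1

/-- The noise-weight matrix W = [[Q, S Bᵥᵀ], [Bᵥ Sᵀ, Bᵥ R Bᵥᵀ]]. -/
def Wmat {r m mv : ℕ} (Q : Matrix (Fin r) (Fin r) ℝ) (S : Matrix (Fin r) (Fin mv) ℝ)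
    (R : Matrix (Fin mv) (Fin mv) ℝ) (Bv : Matrix (Fin m) (Fin mv) ℝ) :
    Matrix (Fin r ⊕ Fin m) (Fin r ⊕ Fin m) ℝ :=
  Matrix.fromBlocks Q (S * Bvᵀ) (Bv * Sᵀ) (Bv * R * Bvᵀ)

/-- The matrix [[Q̄, S̄], [S̄ᵀ, R̄]] = M W Mᵀ. -/
def QSRbar {m mv : ℕ} (l N : ℕ) (u y : ℕ → Fin m → ℝ)
    (Q : Matrix (Fin (N - l)) (Fin (N - l)) ℝ) (S : Matrix (Fin (N - l)) (Fin mv) ℝ)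
    (R : Matrix (Fin mv) (Fin mv) ℝ) (Bv : Matrix (Fin m) (Fin mv) ℝ) :
    Matrix ((rindex l m ⊕ Fin m) ⊕ Fin m) ((rindex l m ⊕ Fin m) ⊕ Fin m) ℝ :=
  Mdata l N u y * Wmat Q S R Bv * (Mdata l N u y)ᵀ

/-- The second block row ((Ã; 0), (B̃; 0), (0; I)) of the matrix G, where Ã, B̃ are the
block-shift matrices of the difference-operator representation: it maps (ξ, u, w) to the
vector ξ₊ whose u-block and y-block are shifted, with u in the slot for `u_k` and w in the
slot for `y_k`. -/
def Kshift (l m : ℕ) : Matrix (rindex l m) ((rindex l m ⊕ Fin m) ⊕ Fin m) ℝ :=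
  Matrix.of fun r c =>
    match r, c with
    | .inl (i, a), .inl (.inl (.inl (i', a'))) =>
        if (i : ℕ) + 1 = (i' : ℕ) ∧ a = a' then 1 else 0
    | .inl (i, a), .inl (.inr a') => if (i : ℕ) + 1 = l ∧ a = a' then 1 else 0
    | .inr (i, a), .inl (.inl (.inr (i', a'))) =>
        if (i : ℕ) + 1 = (i' : ℕ) ∧ a = a' then 1 else 0
    | .inr (i, a), .inr a' => if (i : ℕ) + 1 = l ∧ a = a' then 1 else 0
    | _, _ => 0

/-- The matrix G with block rows (I,0,0), ((Ã;0),(B̃;0),(0;I)), (0,I,0), (0,0,I). -/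
def Gmat (l m : ℕ) :
    Matrix ((rindex l m ⊕ rindex l m) ⊕ (Fin m ⊕ Fin m)) ((rindex l m ⊕ Fin m) ⊕ Fin m) ℝ :=
  Matrix.fromRows
    (Matrix.fromRows
      (Matrix.fromCols (Matrix.fromCols 1 0) 0)
      (Kshift l m))
    (Matrix.fromRows
      (Matrix.fromCols (Matrix.fromCols 0 1) 0)
      (Matrix.fromCols (Matrix.fromCols 0 0) 1))

/-- The block-diagonal multiplier diag(−P, P, Λ, Ψ). -/
def PhiMat {l m : ℕ} (P : Matrix (rindex l m) (rindex l m) ℝ) (Λ Ψ : Matrix (Fin m) (Fin m) ℝ) :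
    Matrix ((rindex l m ⊕ rindex l m) ⊕ (Fin m ⊕ Fin m))
      ((rindex l m ⊕ rindex l m) ⊕ (Fin m ⊕ Fin m)) ℝ :=
  Matrix.fromBlocks (Matrix.fromBlocks (-P) 0 0 P) 0 0 (Matrix.fromBlocks Λ 0 0 Ψ)

/-!
The data enter only through a dualization argument. Along trajectories of the true system the
vector `(ξ_k, u_k, y_k)` lies in the kernel of `F = (C̃, D, −I)`, and the true noise `V*` makes
`N = [[Q̄, S̄], [S̄ᵀ, R̄]] = M W Mᵀ` nonnegative on `range Fᵀ`; since `Q ≺ 0`, every subspace of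
dimension `> m` contains a vector on which `N` is negative, and together these give `N⁻¹ ⪯ 0` on
`ker F`. On `ker F` the LMI therefore reduces to the dissipation inequality
`ξ_{k+1}ᵀ P ξ_{k+1} − ξ_kᵀ P ξ_k + u_kᵀ Λ u_k + y_kᵀ Ψ y_k ≤ 0`.
Summed along the input delayed by `l` steps (so that `ξ_l = 0`), it bounds the partial sums of the
supply by `−ξ_Kᵀ P ξ_K`, which tends to `0` for `ℓ₂` signals whatever the sign of `P`. With
`(Λ, Ψ) = (−γ² I, I)` resp. `(ζ² I, −I)` this says `‖T u‖ ≤ γ ‖u‖` resp. `‖T u‖ ≥ ζ ‖u‖`. Complex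
signals are handled through their real and imaginary parts, as all matrices are real.
-/

section QuadraticForm

variable {ι κ σ : Type*} [Fintype ι] [Fintype κ] [Fintype σ]

lemma dotProduct_transpose_mul_mul_mulVec (X : Matrix κ ι ℝ) (W : Matrix κ κ ℝ) (x : ι → ℝ) :
    x ⬝ᵥ (Xᵀ * W * X) *ᵥ x = (X *ᵥ x) ⬝ᵥ W *ᵥ (X *ᵥ x) := by
  rw [← mulVec_mulVec, ← mulVec_mulVec, dotProduct_transpose_mulVec, dotProduct_comm]

lemma dotProduct_mul_mul_transpose_mulVec (M : Matrix ι κ ℝ) (W : Matrix κ κ ℝ) (x : ι → ℝ) :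
    x ⬝ᵥ (M * W * Mᵀ) *ᵥ x = (Mᵀ *ᵥ x) ⬝ᵥ W *ᵥ (Mᵀ *ᵥ x) := by
  simpa using dotProduct_transpose_mul_mul_mulVec Mᵀ W x

lemma dotProduct_smul_one_mulVec [DecidableEq ι] (c : ℝ) (x : ι → ℝ) :
    x ⬝ᵥ (c • (1 : Matrix ι ι ℝ)) *ᵥ x = c * (x ⬝ᵥ x) := by
  rw [smul_mulVec, one_mulVec, dotProduct_smul, smul_eq_mul]

/-- The dualization lemma. If it failed at `z`, then `N` would be nonnegative on the
`(card κ + 1)`-dimensional space `range Fᵀ ⊔ span {N⁻¹ z}`: the cross terms vanish as `F z = 0`. -/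
theorem dotProduct_nonsing_inv_mulVec_nonpos [DecidableEq ι] {N : Matrix ι ι ℝ} (hN : Nᵀ = N)
    (hdet : IsUnit N.det) {F : Matrix κ ι ℝ} (hF : Function.Injective Fᵀ.mulVec)
    (hpos : ∀ a, 0 ≤ (Fᵀ *ᵥ a) ⬝ᵥ N *ᵥ (Fᵀ *ᵥ a))
    (hneg : ∀ T : Submodule ℝ (ι → ℝ), Fintype.card κ < Module.finrank ℝ T →
      ∃ x ∈ T, x ⬝ᵥ N *ᵥ x < 0)
    {z : ι → ℝ} (hz : F *ᵥ z = 0) : z ⬝ᵥ N⁻¹ *ᵥ z ≤ 0 := by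
  by_contra! hz_pos
  set w := N⁻¹ *ᵥ z
  have hNw : N *ᵥ w = z := by rw [mulVec_mulVec, mul_nonsing_inv _ hdet, one_mulVec]
  have hcross : ∀ a, (Fᵀ *ᵥ a) ⬝ᵥ N *ᵥ w = 0 := fun a => by
    rw [hNw, dotProduct_comm, dotProduct_transpose_mulVec, hz, dotProduct_zero]
  have hww : w ⬝ᵥ N *ᵥ w = z ⬝ᵥ N⁻¹ *ᵥ z := by rw [hNw, dotProduct_comm]
  set V := LinearMap.range (Fᵀ.mulVecLin)
  have hwV : w ∉ V := by
    rintro ⟨a, ha⟩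
    have h0 := hcross a
    rw [show Fᵀ *ᵥ a = w from ha, hww] at h0
    linarith
  have hVT : V < V ⊔ Submodule.span ℝ {w} :=
    left_lt_sup.2 fun h => hwV (h (Submodule.mem_span_singleton_self w))
  have hdim : Fintype.card κ < Module.finrank ℝ ↥(V ⊔ Submodule.span ℝ {w}) := by
    have := Submodule.finrank_lt_finrank_of_lt hVT
    rwa [LinearMap.finrank_range_of_inj hF, Module.finrank_fintype_fun_eq_card] at this
  obtain ⟨x, hx, hx_neg⟩ := hneg _ hdim
  obtain ⟨_, ⟨a, rfl⟩, _, hq, rfl⟩ := Submodule.mem_sup.1 hx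
  obtain ⟨t, rfl⟩ := Submodule.mem_span_singleton.1 hq
  have hsymm : (t • w) ⬝ᵥ N *ᵥ (Fᵀ *ᵥ a) = t * ((Fᵀ *ᵥ a) ⬝ᵥ N *ᵥ w) := by
    rw [smul_dotProduct, ← hN, dotProduct_transpose_mulVec, smul_eq_mul, hN]
  have hexpand : (Fᵀ.mulVecLin a + t • w) ⬝ᵥ N *ᵥ (Fᵀ.mulVecLin a + t • w)
      = (Fᵀ *ᵥ a) ⬝ᵥ N *ᵥ (Fᵀ *ᵥ a) + t ^ 2 * (z ⬝ᵥ N⁻¹ *ᵥ z) := by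
    simp only [mulVecLin_apply, mulVec_add, add_dotProduct, dotProduct_add, hsymm,
      mulVec_smul, dotProduct_smul, smul_dotProduct, smul_eq_mul, hcross, ← hww]
    ring
  rw [hexpand] at hx_neg
  nlinarith [hpos a, sq_nonneg t]

/-- A subspace of dimension `> card κ` meets `{y | y ∘ Sum.inr = 0}` nontrivially, and there the
form of the block matrix reduces to its negative definite corner `Q`. -/
lemma exists_dotProduct_fromBlocks_mulVec_neg {Q : Matrix σ σ ℝ}
    (hQ : ∀ q, q ≠ 0 → q ⬝ᵥ Q *ᵥ q < 0) (S₁ : Matrix σ κ ℝ) (S₂ : Matrix κ σ ℝ)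
    (R : Matrix κ κ ℝ) {T : Submodule ℝ (σ ⊕ κ → ℝ)}
    (hT : Fintype.card κ < Module.finrank ℝ T) :
    ∃ y ∈ T, y ⬝ᵥ fromBlocks Q S₁ S₂ R *ᵥ y < 0 := by
  set π := (LinearMap.funLeft ℝ ℝ (Sum.inr : κ → σ ⊕ κ)).domRestrict T
  have hker : 0 < Module.finrank ℝ (LinearMap.ker π) := by
    have hrange := Submodule.finrank_le (LinearMap.range π)
    rw [Module.finrank_fintype_fun_eq_card] at hrange
    have := LinearMap.finrank_range_add_finrank_ker π
    omega
  have : Nontrivial (LinearMap.ker π) := Module.finrank_pos_iff.1 hker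
  obtain ⟨⟨⟨y, hyT⟩, hy_ker⟩, hy_ne⟩ := exists_ne (0 : LinearMap.ker π)
  have hy_inr : y ∘ Sum.inr = 0 := hy_ker
  have hy : y = Sum.elim (y ∘ Sum.inl) 0 := by
    rw [← hy_inr, Sum.elim_comp_inl_inr]
  have hy0 : y ≠ 0 := fun h => hy_ne (by subst h; rfl)
  have hy_inl : y ∘ Sum.inl ≠ 0 := fun h => hy0 (by rw [hy, h]; exact Sum.elim_zero_zero)
  refine ⟨y, hyT, ?_⟩
  rw [hy, fromBlocks_mulVec, sumElim_dotProduct_sumElim]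
  simpa using hQ _ hy_inl

lemma exists_dotProduct_mul_fromBlocks_mul_transpose_mulVec_neg (M : Matrix ι (σ ⊕ κ) ℝ)
    (hM : Function.Injective Mᵀ.mulVec) {Q : Matrix σ σ ℝ}
    (hQ : ∀ q, q ≠ 0 → q ⬝ᵥ Q *ᵥ q < 0) (S₁ : Matrix σ κ ℝ) (S₂ : Matrix κ σ ℝ)
    (R : Matrix κ κ ℝ) {T : Submodule ℝ (ι → ℝ)} (hT : Fintype.card κ < Module.finrank ℝ T) :
    ∃ x ∈ T, x ⬝ᵥ (M * fromBlocks Q S₁ S₂ R * Mᵀ) *ᵥ x < 0 := by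
  have hdim : Fintype.card κ < Module.finrank ℝ (T.map Mᵀ.mulVecLin) := by
    rwa [← (Submodule.equivMapOfInjective _ hM T).finrank_eq]
  obtain ⟨_, ⟨x, hx, rfl⟩, hneg⟩ := exists_dotProduct_fromBlocks_mulVec_neg hQ S₁ S₂ R hdim
  exact ⟨x, hx, by rwa [dotProduct_mul_mul_transpose_mulVec]⟩

lemma tendsto_dotProduct_mulVec_self (P : Matrix ι ι ℝ)
    {x : ℕ → ι → ℝ} (hx : Tendsto x atTop (𝓝 0)) :
    Tendsto (fun K => x K ⬝ᵥ P *ᵥ x K) atTop (𝓝 0) := by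
  have hcont : Continuous fun v : ι → ℝ => v ⬝ᵥ P *ᵥ v :=
    continuous_id.dotProduct (continuous_const.matrix_mulVec continuous_id)
  exact (hcont.tendsto' 0 0 (by simp)).comp hx

end QuadraticForm

section DifferenceOperator

variable {m l : ℕ} (Amats Bmats : Fin l → Matrix (Fin m) (Fin m) ℝ)
  (D : Matrix (Fin m) (Fin m) ℝ)

def Ctil : Matrix (Fin m) (rindex l m) ℝ :=
  Matrix.of fun a => Sum.elim (fun p => Bmats p.1 a p.2) (fun p => -Amats p.1 a p.2)

def Fmat : Matrix (Fin m) ((rindex l m ⊕ Fin m) ⊕ Fin m) ℝ :=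
  fromCols (fromCols (Ctil Amats Bmats) D) (-1)

def extState (l : ℕ) (u y : ℕ → Fin m → ℝ) (k : ℕ) : (rindex l m ⊕ Fin m) ⊕ Fin m → ℝ :=
  (xi l u y k ⊕ᵥ u k) ⊕ᵥ y k

lemma Ctil_mulVec_xi (u y : ℕ → Fin m → ℝ) (k : ℕ) :
    Ctil Amats Bmats *ᵥ xi l u y k
      = (∑ i : Fin l, Bmats i *ᵥ u (k - l + i)) - ∑ i : Fin l, Amats i *ᵥ y (k - l + i) := by
  ext a
  simp only [mulVec, dotProduct, Ctil, xi, of_apply, Fintype.sum_sum_type,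
    Fintype.sum_prod_type, Sum.elim_inl, Sum.elim_inr, Pi.sub_apply, Finset.sum_apply, neg_mul,
    Finset.sum_neg_distrib, sub_eq_add_neg]

lemma Fmat_mulVec_extState (u y : ℕ → Fin m → ℝ) (k : ℕ) :
    Fmat Amats Bmats D *ᵥ extState l u y k
      = -(∑ i : Fin l, Amats i *ᵥ y (k - l + i)) + D *ᵥ u k
        + (∑ i : Fin l, Bmats i *ᵥ u (k - l + i)) - y k := by
  rw [Fmat, extState, fromCols_mulVec_sumElim, fromCols_mulVec_sumElim, neg_mulVec, one_mulVec,
    Ctil_mulVec_xi]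
  abel

lemma Fmat_transpose_mulVec_injective : Function.Injective (Fmat Amats Bmats D)ᵀ.mulVec := by
  intro a b hab
  have := congrArg (· ∘ Sum.inr) hab
  simpa [Fmat, transpose_fromCols, fromRows_mulVec, neg_mulVec] using this

lemma xi_self_eq_zero {u y : ℕ → Fin m → ℝ} (hu : ∀ k < l, u k = 0)
    (hy : ∀ k < l, y k = 0) : xi l u y l = 0 := by
  funext r
  rcases r with ⟨i, a⟩ | ⟨i, a⟩ <;> simp [xi, hu, hy]

lemma tendsto_xi {u y : ℕ → Fin m → ℝ} (hu : Tendsto u atTop (𝓝 0))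
    (hy : Tendsto y atTop (𝓝 0)) : Tendsto (xi l u y) atTop (𝓝 0) := by
  have hidx (i : ℕ) : Tendsto (fun K => K - l + i) atTop atTop :=
    tendsto_atTop_atTop.2 fun b => ⟨b + l, fun K hK => by omega⟩
  refine tendsto_pi_nhds.2 fun r => ?_
  rcases r with ⟨i, a⟩ | ⟨i, a⟩
  · exact (continuous_apply a).tendsto' 0 0 rfl |>.comp (hu.comp (hidx i))
  · exact (continuous_apply a).tendsto' 0 0 rfl |>.comp (hy.comp (hidx i))

end DifferenceOperator

section NoisyData

variable {m mv l N : ℕ} {Amats Bmats : Fin l → Matrix (Fin m) (Fin m) ℝ}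
  {D : Matrix (Fin m) (Fin m) ℝ} {Bv : Matrix (Fin m) (Fin mv) ℝ}
  {Q : Matrix (Fin (N - l)) (Fin (N - l)) ℝ} {S : Matrix (Fin (N - l)) (Fin mv) ℝ}
  {R : Matrix (Fin mv) (Fin mv) ℝ} {u y : ℕ → Fin m → ℝ}

lemma inNoiseSet.dotProduct_fromBlocks_mulVec_nonneg {r : ℕ} {Q : Matrix (Fin r) (Fin r) ℝ}
    {S : Matrix (Fin r) (Fin mv) ℝ} {R : Matrix (Fin mv) (Fin mv) ℝ}
    {V : Matrix (Fin mv) (Fin r) ℝ} (hV : inNoiseSet Q S R V) (c : Fin mv → ℝ) :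
    0 ≤ (Vᵀ *ᵥ c ⊕ᵥ c) ⬝ᵥ fromBlocks Q S Sᵀ R *ᵥ (Vᵀ *ᵥ c ⊕ᵥ c) := by
  simpa [dotProduct_transpose_mul_mul_mulVec, fromRows_mulVec] using hV.2 c

lemma Wmat_eq {r : ℕ} (Q : Matrix (Fin r) (Fin r) ℝ) (S : Matrix (Fin r) (Fin mv) ℝ) :
    Wmat Q S R Bv = fromBlocks (1 : Matrix (Fin r) (Fin r) ℝ) 0 0 Bv * fromBlocks Q S Sᵀ R
      * (fromBlocks (1 : Matrix (Fin r) (Fin r) ℝ) 0 0 Bv)ᵀ := by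
  rw [fromBlocks_transpose, fromBlocks_multiply, fromBlocks_multiply]
  simp [Wmat, Matrix.mul_assoc]

lemma Fmat_mul_Mdata {V : Matrix (Fin mv) (Fin (N - l)) ℝ}
    (hdata : ∀ j : Fin (N - l),
      Fmat Amats Bmats D *ᵥ extState l u y (l + j) = -(Bv *ᵥ Vᵀ j)) :
    Fmat Amats Bmats D * Mdata l N u y = fromCols (-(Bv * V)) (-1) := by
  ext a (j | b)
  · have hcol : (fun r => Mdata l N u y r (Sum.inl j)) = extState l u y (l + j) := by
      funext r
      rcases r with (r | r) | r <;> rfl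
    have := congrFun (hdata j) a
    rw [← hcol] at this
    simpa [mul_apply, mulVec, dotProduct] using this
  · simp [Mdata, mul_apply, fromBlocks, Fmat, one_apply]

lemma dotProduct_QSRbar_mulVec_Fmat_transpose {V : Matrix (Fin mv) (Fin (N - l)) ℝ}
    (hdata : ∀ j : Fin (N - l),
      Fmat Amats Bmats D *ᵥ extState l u y (l + j) = -(Bv *ᵥ Vᵀ j)) (a : Fin m → ℝ) :
    (Fmat Amats Bmats D)ᵀ *ᵥ a ⬝ᵥ QSRbar l N u y Q S R Bv *ᵥ ((Fmat Amats Bmats D)ᵀ *ᵥ a)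
      = (Vᵀ *ᵥ (Bvᵀ *ᵥ a) ⊕ᵥ Bvᵀ *ᵥ a) ⬝ᵥ fromBlocks Q S Sᵀ R
          *ᵥ (Vᵀ *ᵥ (Bvᵀ *ᵥ a) ⊕ᵥ Bvᵀ *ᵥ a) := by
  have hM : (Mdata l N u y)ᵀ *ᵥ ((Fmat Amats Bmats D)ᵀ *ᵥ a) = -(Vᵀ *ᵥ (Bvᵀ *ᵥ a) ⊕ᵥ a) := by
    rw [mulVec_mulVec, ← transpose_mul, Fmat_mul_Mdata hdata,
      transpose_fromCols, fromRows_mulVec]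
    simp [transpose_mul, neg_mulVec, mulVec_mulVec, Sum.elim_neg_neg]
  rw [QSRbar, dotProduct_mul_mul_transpose_mulVec, hM, mulVec_neg, dotProduct_neg,
    neg_dotProduct, neg_neg, Wmat_eq, dotProduct_mul_mul_transpose_mulVec]
  simp [fromBlocks_transpose, fromBlocks_mulVec]

lemma Fmat_mulVec_extState_of_data {v : ℕ → Fin mv → ℝ}
    (hdata : ∀ k, l ≤ k → k < N →
      y k = -(∑ i : Fin l, (Amats i).mulVec (y (k - l + (i : ℕ))))
        + D.mulVec (u k) + (∑ i : Fin l, (Bmats i).mulVec (u (k - l + (i : ℕ))))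
        + Bv.mulVec (v k)) (j : Fin (N - l)) :
    Fmat Amats Bmats D *ᵥ extState l u y (l + j)
      = -(Bv *ᵥ (Matrix.of fun a (j : Fin (N - l)) => v (l + (j : ℕ)) a)ᵀ j) := by
  rw [Fmat_mulVec_extState, hdata (l + j) (Nat.le_add_right l j) (by omega)]
  change _ = -(Bv *ᵥ v (l + j))
  abel

lemma QSRbar_transpose (hQ : Q.IsSymm) (hR : R.IsSymm) :
    (QSRbar l N u y Q S R Bv)ᵀ = QSRbar l N u y Q S R Bv := by
  have hW : (Wmat Q S R Bv)ᵀ = Wmat Q S R Bv := by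
    simp [Wmat, fromBlocks_transpose, transpose_mul, hQ.eq, hR.eq, Matrix.mul_assoc]
  rw [QSRbar, transpose_mul, transpose_mul, transpose_transpose, hW, Matrix.mul_assoc]

lemma Mdata_transpose_mulVec_injective (hinv : IsUnit (QSRbar l N u y Q S R Bv).det) :
    Function.Injective (Mdata l N u y)ᵀ.mulVec := by
  intro x x' h
  apply mulVec_injective_iff_isUnit.2 ((isUnit_iff_isUnit_det _).2 hinv)
  simp only [QSRbar, ← mulVec_mulVec, h]

theorem dotProduct_QSRbar_inv_mulVec_nonpos (hQ : IsNegDef Q) (hR : R.IsSymm)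
    {V : Matrix (Fin mv) (Fin (N - l)) ℝ}
    (hdata : ∀ j : Fin (N - l), Fmat Amats Bmats D *ᵥ extState l u y (l + j) = -(Bv *ᵥ Vᵀ j))
    (hV : inNoiseSet Q S R V) (hinv : IsUnit (QSRbar l N u y Q S R Bv).det)
    {z : (rindex l m ⊕ Fin m) ⊕ Fin m → ℝ} (hz : Fmat Amats Bmats D *ᵥ z = 0) :
    z ⬝ᵥ (QSRbar l N u y Q S R Bv)⁻¹ *ᵥ z ≤ 0 := by
  refine dotProduct_nonsing_inv_mulVec_nonpos (QSRbar_transpose hQ.1 hR) hinv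
    (Fmat_transpose_mulVec_injective Amats Bmats D) (fun a => ?_) (fun T hT => ?_) hz
  · rw [dotProduct_QSRbar_mulVec_Fmat_transpose hdata]
    exact hV.dotProduct_fromBlocks_mulVec_nonneg _
  · exact exists_dotProduct_mul_fromBlocks_mul_transpose_mulVec_neg (Mdata l N u y)
      (Mdata_transpose_mulVec_injective hinv) hQ.2 (S * Bvᵀ) (Bv * Sᵀ) (Bv * R * Bvᵀ) hT

end NoisyData

section Shift

variable {l m : ℕ}

/-- `Kshift` moves every entry of `(ξ, u, w)` one slot back; `shiftIndex r` is the entry that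
lands in slot `r` of the new `ξ`. -/
def shiftIndex : rindex l m → (rindex l m ⊕ Fin m) ⊕ Fin m
  | .inl (i, a) => if h : (i : ℕ) + 1 < l then .inl (.inl (.inl (⟨i + 1, h⟩, a))) else .inl (.inr a)
  | .inr (i, a) => if h : (i : ℕ) + 1 < l then .inl (.inl (.inr (⟨i + 1, h⟩, a))) else .inr a

lemma Kshift_apply (r : rindex l m) (c : (rindex l m ⊕ Fin m) ⊕ Fin m) :
    Kshift l m r c = if c = shiftIndex r then 1 else 0 := by
  rcases r with ⟨i, a⟩ | ⟨i, a⟩ <;> rcases c with ((⟨i', a'⟩ | ⟨i', a'⟩) | a') | a' <;>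
    by_cases h : (i : ℕ) + 1 < l <;> simp [Kshift, shiftIndex, h, Fin.ext_iff, eq_comm] <;>
    (try intro _ _) <;> (try split_ifs) <;> first | rfl | omega

lemma Kshift_mulVec (z : (rindex l m ⊕ Fin m) ⊕ Fin m → ℝ) :
    Kshift l m *ᵥ z = z ∘ shiftIndex := by
  ext r
  simp [mulVec, dotProduct, Kshift_apply]

lemma extState_comp_shiftIndex (u y : ℕ → Fin m → ℝ) {k : ℕ} (hk : l ≤ k) :
    extState l u y k ∘ shiftIndex = xi l u y (k + 1) := by
  funext r
  rcases r with ⟨i, a⟩ | ⟨i, a⟩ <;> by_cases h : (i : ℕ) + 1 < l <;>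
    simp only [Function.comp_apply, shiftIndex, h, dif_pos, dif_neg, not_false_eq_true,
      extState, xi, Sum.elim_inl, Sum.elim_inr] <;> congr 1 <;> omega

lemma Gmat_PhiMat_quadForm (P : Matrix (rindex l m) (rindex l m) ℝ)
    (Λ Ψ : Matrix (Fin m) (Fin m) ℝ) (ξ : rindex l m → ℝ) (u w : Fin m → ℝ) :
    ((ξ ⊕ᵥ u) ⊕ᵥ w) ⬝ᵥ ((Gmat l m)ᵀ * PhiMat P Λ Ψ * Gmat l m) *ᵥ ((ξ ⊕ᵥ u) ⊕ᵥ w)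
      = (Kshift l m *ᵥ ((ξ ⊕ᵥ u) ⊕ᵥ w)) ⬝ᵥ P *ᵥ (Kshift l m *ᵥ ((ξ ⊕ᵥ u) ⊕ᵥ w))
        - ξ ⬝ᵥ P *ᵥ ξ + u ⬝ᵥ Λ *ᵥ u + w ⬝ᵥ Ψ *ᵥ w := by
  have hG : Gmat l m *ᵥ ((ξ ⊕ᵥ u) ⊕ᵥ w)
      = (ξ ⊕ᵥ Kshift l m *ᵥ ((ξ ⊕ᵥ u) ⊕ᵥ w)) ⊕ᵥ (u ⊕ᵥ w) := by
    simp only [Gmat, fromRows_mulVec, fromCols_mulVec_sumElim, zero_mulVec, add_zero, zero_add,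
      one_mulVec]
  rw [dotProduct_transpose_mul_mul_mulVec, hG, PhiMat]
  simp only [fromBlocks_mulVec, sumElim_dotProduct_sumElim, Sum.elim_comp_inl,
    Sum.elim_comp_inr, zero_mulVec, add_zero, zero_add, neg_mulVec, dotProduct_neg]
  ring

end Shift

section Dissipation

variable {l m : ℕ} {Amats Bmats : Fin l → Matrix (Fin m) (Fin m) ℝ}
  {D : Matrix (Fin m) (Fin m) ℝ} {P : Matrix (rindex l m) (rindex l m) ℝ}
  {Λ Ψ : Matrix (Fin m) (Fin m) ℝ} {μ : ℝ}
  {Ninv : Matrix ((rindex l m ⊕ Fin m) ⊕ Fin m) ((rindex l m ⊕ Fin m) ⊕ Fin m) ℝ}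
  {u y : ℕ → Fin m → ℝ}

lemma storage_succ_sub_le
    (hlmi : IsNegSemidef ((Gmat l m)ᵀ * PhiMat P Λ Ψ * Gmat l m - μ • Ninv)) (hμ : 0 ≤ μ)
    (hker : ∀ z, Fmat Amats Bmats D *ᵥ z = 0 → z ⬝ᵥ Ninv *ᵥ z ≤ 0) {k : ℕ} (hk : l ≤ k)
    (hrel : Fmat Amats Bmats D *ᵥ extState l u y k = 0) :
    xi l u y (k + 1) ⬝ᵥ P *ᵥ xi l u y (k + 1) - xi l u y k ⬝ᵥ P *ᵥ xi l u y k
      + (u k ⬝ᵥ Λ *ᵥ u k + y k ⬝ᵥ Ψ *ᵥ y k) ≤ 0 := by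
  have hlmi_k := hlmi.2 (extState l u y k)
  rw [sub_mulVec, dotProduct_sub, smul_mulVec, dotProduct_smul, smul_eq_mul, extState,
    Gmat_PhiMat_quadForm, ← extState, Kshift_mulVec, extState_comp_shiftIndex u y hk] at hlmi_k
  nlinarith [hker _ hrel]

lemma sum_supply_le
    (hlmi : IsNegSemidef ((Gmat l m)ᵀ * PhiMat P Λ Ψ * Gmat l m - μ • Ninv)) (hμ : 0 ≤ μ)
    (hker : ∀ z, Fmat Amats Bmats D *ᵥ z = 0 → z ⬝ᵥ Ninv *ᵥ z ≤ 0)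
    (hrel : ∀ k, l ≤ k → Fmat Amats Bmats D *ᵥ extState l u y k = 0) {K : ℕ} (hK : l ≤ K) :
    ∑ k ∈ Finset.Ico l K, (u k ⬝ᵥ Λ *ᵥ u k + y k ⬝ᵥ Ψ *ᵥ y k)
      ≤ xi l u y l ⬝ᵥ P *ᵥ xi l u y l - xi l u y K ⬝ᵥ P *ᵥ xi l u y K := by
  induction K, hK using Nat.le_induction with
  | base => simp
  | succ K hK ih =>
    rw [Finset.sum_Ico_succ_top hK]
    linarith [storage_succ_sub_le hlmi hμ hker hK (hrel K hK)]

end Dissipation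

section Signals

variable {n m : ℕ}

lemma act_mul {a b c : ℕ} (M : Matrix (Fin a) (Fin b) ℝ) (M' : Matrix (Fin b) (Fin c) ℝ)
    (v : Evec c) : act (M * M') v = act M (act M' v) := by
  have hmap : (M * M').map Complex.ofReal = M.map Complex.ofReal * M'.map Complex.ofReal :=
    Matrix.map_mul (f := Complex.ofRealHom)
  simp [act, hmap, toLpLin_apply, mulVec_mulVec]

lemma act_sum {a b : ℕ} (M : Matrix (Fin a) (Fin b) ℝ) {ι : Type*} (s : Finset ι)
    (f : ι → Evec b) : act M (∑ i ∈ s, f i) = ∑ i ∈ s, act M (f i) :=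
  map_sum _ f s

lemma act_zero {a b : ℕ} (M : Matrix (Fin a) (Fin b) ℝ) : act M 0 = 0 :=
  map_zero _

def DiffRel {l : ℕ} (Amats Bmats : Fin l → Matrix (Fin m) (Fin m) ℝ)
    (D : Matrix (Fin m) (Fin m) ℝ) (u y : ℕ → Evec m) : Prop :=
  ∀ k, l ≤ k →
    y k = -(∑ i : Fin l, act (Amats i) (y (k - l + (i : ℕ))))
      + act D (u k) + ∑ i : Fin l, act (Bmats i) (u (k - l + (i : ℕ)))

lemma output_eq_of_state (A : Matrix (Fin n) (Fin n) ℝ) (B : Matrix (Fin n) (Fin m) ℝ)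
    (C : Matrix (Fin m) (Fin n) ℝ) (D : Matrix (Fin m) (Fin m) ℝ) (u : ℕ → Evec m) :
    let x : ℕ → Evec n := fun k => ∑ i ∈ Finset.range k, act (A ^ (k - 1 - i) * B) (u i)
    (∀ k, x (k + 1) = act A (x k) + act B (u k)) ∧
      ∀ k, output A B C D u k = act C (x k) + act D (u k) := by
  refine ⟨fun k => ?_, fun k => ?_⟩ <;> dsimp only
  · rw [Finset.sum_range_succ, Nat.add_sub_cancel, Nat.sub_self, pow_zero, Matrix.one_mul,
      act_sum, add_left_inj]
    refine Finset.sum_congr rfl fun i hi => ?_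
    rw [← act_mul, ← Matrix.mul_assoc, ← pow_succ',
      show k - i = k - 1 - i + 1 by have := Finset.mem_range.1 hi; omega]
  · rw [output, add_comm, act_sum]
    exact congrArg (· + _) (Finset.sum_congr rfl fun i _ => by rw [← act_mul, Matrix.mul_assoc])

end Signals

section Delay

variable {α : Type*} [Zero α] (l : ℕ)

def delay (f : ℕ → α) (k : ℕ) : α := if k < l then 0 else f (k - l)

variable {l}

lemma delay_of_lt (f : ℕ → α) {k : ℕ} (hk : k < l) : delay l f k = 0 := if_pos hk

lemma delay_add (f : ℕ → α) (k : ℕ) : delay l f (k + l) = f k := by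
  simp [delay]

lemma output_delay {n m : ℕ} (A : Matrix (Fin n) (Fin n) ℝ) (B : Matrix (Fin n) (Fin m) ℝ)
    (C : Matrix (Fin m) (Fin n) ℝ) (D : Matrix (Fin m) (Fin m) ℝ) (u : ℕ → Evec m) :
    output A B C D (delay l u) = delay l (output A B C D u) := by
  funext k
  by_cases hk : k < l
  · rw [delay_of_lt _ hk, output, delay_of_lt _ hk, act_zero, zero_add]
    exact Finset.sum_eq_zero fun i hi => by
      rw [delay_of_lt _ (by have := Finset.mem_range.1 hi; omega), act_zero]
  · obtain ⟨k, rfl⟩ : ∃ j, k = j + l := ⟨k - l, by omega⟩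
    rw [delay_add, output, output, delay_add, add_comm k l, Finset.sum_range_add,
      Finset.sum_eq_zero fun i hi => by rw [delay_of_lt _ (Finset.mem_range.1 hi), act_zero],
      zero_add]
    refine congrArg _ (Finset.sum_congr rfl fun i _ => ?_)
    rw [add_comm l i, delay_add, show l + k - 1 - (i + l) = k - 1 - i by omega]

lemma tendsto_delay [TopologicalSpace α] {f : ℕ → α}
    (hf : Tendsto f atTop (𝓝 0)) : Tendsto (delay l f) atTop (𝓝 0) :=
  (tendsto_add_atTop_iff_nat l).1 (by simpa only [delay_add] using hf)

end Delay

section Components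

variable {m : ℕ}

def compSig (φ : ℂ →L[ℝ] ℝ) (f : ℕ → Evec m) (k : ℕ) : Fin m → ℝ := fun a => φ (f k a)

lemma map_act_apply (φ : ℂ →L[ℝ] ℝ) {a b : ℕ} (M : Matrix (Fin a) (Fin b) ℝ) (v : Evec b)
    (i : Fin a) : φ (act M v i) = (M *ᵥ fun j => φ (v j)) i := by
  change φ (∑ j, (M i j : ℂ) * v j) = ∑ j, M i j * φ (v j)
  simp [← Complex.real_smul]

lemma DiffRel.Fmat_mulVec_extState_compSig {l : ℕ}
    {Amats Bmats : Fin l → Matrix (Fin m) (Fin m) ℝ} {D : Matrix (Fin m) (Fin m) ℝ}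
    {u y : ℕ → Evec m} (h : DiffRel Amats Bmats D u y)
    (φ : ℂ →L[ℝ] ℝ) {k : ℕ} (hk : l ≤ k) :
    Fmat Amats Bmats D *ᵥ extState l (compSig φ u) (compSig φ y) k = 0 := by
  rw [Fmat_mulVec_extState, sub_eq_zero]
  ext a
  have := congrArg (fun v : Evec m => φ (v a)) (h k hk)
  simp only [PiLp.add_apply, PiLp.neg_apply, WithLp.ofLp_sum, Finset.sum_apply, map_add,
    map_neg, map_sum, map_act_apply] at this
  simp only [Pi.add_apply, Pi.neg_apply, Finset.sum_apply]
  exact this.symm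

lemma norm_sq_eq_compSig (f : ℕ → Evec m) (k : ℕ) :
    ‖f k‖ ^ 2 = compSig Complex.reCLM f k ⬝ᵥ compSig Complex.reCLM f k
      + compSig Complex.imCLM f k ⬝ᵥ compSig Complex.imCLM f k := by
  simp [EuclideanSpace.norm_sq_eq, compSig, dotProduct, ← Finset.sum_add_distrib,
    Complex.sq_norm, Complex.normSq_apply]

lemma tendsto_compSig (φ : ℂ →L[ℝ] ℝ) {f : ℕ → Evec m} (hf : Tendsto f atTop (𝓝 0)) :
    Tendsto (compSig φ f) atTop (𝓝 0) := by
  have hcont : Continuous fun (v : Evec m) (a : Fin m) => φ (v a) := by fun_prop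
  exact (hcont.tendsto' 0 0 (by ext; simp)).comp hf

lemma compSig_delay_of_lt {l : ℕ} (φ : ℂ →L[ℝ] ℝ) (f : ℕ → Evec m) {k : ℕ} (hk : k < l) :
    compSig φ (delay l f) k = 0 := by
  funext a
  simp [compSig, delay_of_lt f hk]

lemma compSig_delay_add {l : ℕ} (φ : ℂ →L[ℝ] ℝ) (f : ℕ → Evec m) (k : ℕ) :
    compSig φ (delay l f) (k + l) = compSig φ f k := by
  funext a
  exact congrArg (fun v : Evec m => φ (v a)) (delay_add f k)

end Components

lemma tendsto_zero_of_summable_norm_sq {E : Type*} [NormedAddCommGroup E] {f : ℕ → E}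
    (hf : Summable fun k => ‖f k‖ ^ 2) : Tendsto f atTop (𝓝 0) := by
  rw [tendsto_zero_iff_norm_tendsto_zero]
  simpa [Real.sqrt_sq (norm_nonneg _)] using hf.tendsto_atTop_zero.sqrt

section SupplyBound

variable {n m l : ℕ} {A : Matrix (Fin n) (Fin n) ℝ} {B : Matrix (Fin n) (Fin m) ℝ}
  {C : Matrix (Fin m) (Fin n) ℝ} {D : Matrix (Fin m) (Fin m) ℝ}
  {Amats Bmats : Fin l → Matrix (Fin m) (Fin m) ℝ} {P : Matrix (rindex l m) (rindex l m) ℝ}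
  {Λ Ψ : Matrix (Fin m) (Fin m) ℝ} {μ : ℝ}
  {Ninv : Matrix ((rindex l m ⊕ Fin m) ⊕ Fin m) ((rindex l m ⊕ Fin m) ⊕ Fin m) ℝ}

lemma sum_range_supply_compSig_le
    (hlmi : IsNegSemidef ((Gmat l m)ᵀ * PhiMat P Λ Ψ * Gmat l m - μ • Ninv)) (hμ : 0 ≤ μ)
    (hker : ∀ z, Fmat Amats Bmats D *ᵥ z = 0 → z ⬝ᵥ Ninv *ᵥ z ≤ 0) {u y : ℕ → Evec m}
    (hrel : DiffRel Amats Bmats D (delay l u) (delay l y)) (φ : ℂ →L[ℝ] ℝ) (n : ℕ) :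
    let ξ := xi l (compSig φ (delay l u)) (compSig φ (delay l y)) (n + l)
    ∑ k ∈ Finset.range n,
        (compSig φ u k ⬝ᵥ Λ *ᵥ compSig φ u k + compSig φ y k ⬝ᵥ Ψ *ᵥ compSig φ y k)
      ≤ -(ξ ⬝ᵥ P *ᵥ ξ) := by
  have h := sum_supply_le hlmi hμ hker (fun k hk => hrel.Fmat_mulVec_extState_compSig φ hk)
    (Nat.le_add_left l n)
  rw [xi_self_eq_zero (fun k hk => compSig_delay_of_lt φ u hk)
    (fun k hk => compSig_delay_of_lt φ y hk), Finset.sum_Ico_eq_sum_range] at h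
  simpa only [add_comm l, compSig_delay_add, Nat.add_sub_cancel, mulVec_zero, dotProduct_zero,
    zero_sub] using h

theorem supply_tsum_nonpos
    (hdiff : ∀ (x : ℕ → Evec n) (uc yc : ℕ → Evec m),
      (∀ k, x (k + 1) = act A (x k) + act B (uc k)) →
      (∀ k, yc k = act C (x k) + act D (uc k)) → DiffRel Amats Bmats D uc yc)
    (hlmi : IsNegSemidef ((Gmat l m)ᵀ * PhiMat P Λ Ψ * Gmat l m - μ • Ninv)) (hμ : 0 ≤ μ)
    (hker : ∀ z, Fmat Amats Bmats D *ᵥ z = 0 → z ⬝ᵥ Ninv *ᵥ z ≤ 0) {c d : ℝ}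
    (hΛ : ∀ x, x ⬝ᵥ Λ *ᵥ x = c * (x ⬝ᵥ x)) (hΨ : ∀ x, x ⬝ᵥ Ψ *ᵥ x = d * (x ⬝ᵥ x))
    {u : ℕ → Evec m} (hu : Summable fun k => ‖u k‖ ^ 2)
    (hy : Summable fun k => ‖output A B C D u k‖ ^ 2) :
    c * ∑' k, ‖u k‖ ^ 2 + d * ∑' k, ‖output A B C D u k‖ ^ 2 ≤ 0 := by
  set y := output A B C D u
  have hrel : DiffRel Amats Bmats D (delay l u) (delay l y) := by
    obtain ⟨hstate, houtput⟩ := output_eq_of_state A B C D (delay l u)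
    rw [← output_delay]
    exact hdiff _ _ _ hstate houtput
  let storage (φ : ℂ →L[ℝ] ℝ) (K : ℕ) :=
    xi l (compSig φ (delay l u)) (compSig φ (delay l y)) K ⬝ᵥ P
      *ᵥ xi l (compSig φ (delay l u)) (compSig φ (delay l y)) K
  have hpartial (N : ℕ) : ∑ k ∈ Finset.range N, (c * ‖u k‖ ^ 2 + d * ‖y k‖ ^ 2)
      ≤ -storage Complex.reCLM (N + l) + -storage Complex.imCLM (N + l) := by
    have hre := sum_range_supply_compSig_le hlmi hμ hker hrel Complex.reCLM N
    have him := sum_range_supply_compSig_le hlmi hμ hker hrel Complex.imCLM N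
    simp only [hΛ, hΨ] at hre him
    simp only [norm_sq_eq_compSig u, norm_sq_eq_compSig y]
    have := add_le_add hre him
    rw [← Finset.sum_add_distrib] at this
    exact (Finset.sum_congr rfl fun k _ => by ring).trans_le this
  have hstorage (φ : ℂ →L[ℝ] ℝ) : Tendsto (fun N => storage φ (N + l)) atTop (𝓝 0) :=
    (tendsto_dotProduct_mulVec_self P (tendsto_xi
      (tendsto_compSig φ (tendsto_delay (tendsto_zero_of_summable_norm_sq hu)))
      (tendsto_compSig φ (tendsto_delay (tendsto_zero_of_summable_norm_sq hy))))).comp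
      (tendsto_add_atTop_nat l)
  have hsum : Tendsto (fun N => ∑ k ∈ Finset.range N, (c * ‖u k‖ ^ 2 + d * ‖y k‖ ^ 2)) atTop
      (𝓝 (c * ∑' k, ‖u k‖ ^ 2 + d * ∑' k, ‖y k‖ ^ 2)) :=
    ((hu.hasSum.mul_left c).add (hy.hasSum.mul_left d)).tendsto_sum_nat
  simpa using le_of_tendsto_of_tendsto' hsum ((hstorage _).neg.add (hstorage _).neg) hpartial

end SupplyBound

section GainBounds

variable {m : ℕ}

lemma enorm2_ne_top_iff (f : ℕ → Evec m) : enorm2 f ≠ ⊤ ↔ Summable fun k => ‖f k‖ ^ 2 := by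
  have hsum : (∑' k, (‖f k‖₊ : ℝ≥0∞) ^ 2) = ∑' k, ((‖f k‖₊ ^ 2 : NNReal) : ℝ≥0∞) := by
    simp only [ENNReal.coe_pow]
  rw [enorm2, Ne, ENNReal.rpow_eq_top_iff_of_pos (by norm_num), hsum,
    ← Ne, ENNReal.tsum_coe_ne_top_iff_summable, ← NNReal.summable_coe]
  simp

lemma enorm2_eq_ofReal_sqrt {f : ℕ → Evec m} (hf : Summable fun k => ‖f k‖ ^ 2) :
    enorm2 f = ENNReal.ofReal √(∑' k, ‖f k‖ ^ 2) := by
  rw [enorm2, Real.sqrt_eq_rpow,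
    ← ENNReal.ofReal_rpow_of_nonneg (tsum_nonneg fun _ => by positivity) (by norm_num),
    ENNReal.ofReal_tsum_of_nonneg (fun _ => by positivity) hf]
  simp [ENNReal.ofReal_pow, ofReal_norm, enorm_eq_nnnorm]

lemma ofReal_mul_enorm2 {c : ℝ} (hc : 0 ≤ c) {f : ℕ → Evec m}
    (hf : Summable fun k => ‖f k‖ ^ 2) :
    ENNReal.ofReal c * enorm2 f = ENNReal.ofReal √(c ^ 2 * ∑' k, ‖f k‖ ^ 2) := by
  rw [enorm2_eq_ofReal_sqrt hf, ← ENNReal.ofReal_mul hc, Real.sqrt_mul (sq_nonneg c),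
    Real.sqrt_sq hc]

lemma enorm2_ne_zero {f : ℕ → Evec m} (hf : f ≠ 0) : enorm2 f ≠ 0 := by
  obtain ⟨k, hk⟩ := Function.ne_iff.1 hf
  rw [enorm2, Ne, ENNReal.rpow_eq_zero_iff_of_pos (by norm_num), ENNReal.tsum_eq_zero]
  exact fun h => hk (by simpa using h k)

lemma maxGain_le_ofReal {dom : Set (ℕ → Evec m)} {T : (ℕ → Evec m) → ℕ → Evec m} {γ : ℝ}
    (h : ∀ u ∈ dom, enorm2 (T u) ≤ ENNReal.ofReal γ * enorm2 u) :
    maxGain dom T ≤ ENNReal.ofReal γ :=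
  iSup₂_le fun u hu => ENNReal.div_le_of_le_mul (h u hu.1)

lemma ofReal_le_minGain {dom : Set (ℕ → Evec m)} {T : (ℕ → Evec m) → ℕ → Evec m} {ζ : ℝ}
    (hdom : ∀ u ∈ dom, enorm2 u ≠ ⊤) (h : ∀ u ∈ dom, ENNReal.ofReal ζ * enorm2 u ≤ enorm2 (T u)) :
    ENNReal.ofReal ζ ≤ minGain dom T :=
  le_iInf₂ fun u hu => (ENNReal.le_div_iff_mul_le (.inl (enorm2_ne_zero hu.2))
    (.inl (hdom u hu.1))).2 (h u hu.1)

end GainBounds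

theorem stmt17_general {n m mv : ℕ}
    (A : Matrix (Fin n) (Fin n) ℝ) (B : Matrix (Fin n) (Fin m) ℝ)
    (C : Matrix (Fin m) (Fin n) ℝ) (D : Matrix (Fin m) (Fin m) ℝ)
    (l N : ℕ)
    (Amats Bmats : Fin l → Matrix (Fin m) (Fin m) ℝ)
    -- the true system admits the difference-operator representation
    -- y_k = −A_l y_{k-1} − ⋯ − A_1 y_{k-l} + D u_k + B_l u_{k-1} + ⋯ + B_1 u_{k-l}:
    (hdiff : ∀ (x : ℕ → Evec n) (uc yc : ℕ → Evec m),
      (∀ k, x (k + 1) = act A (x k) + act B (uc k)) →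
      (∀ k, yc k = act C (x k) + act D (uc k)) →
      ∀ k, l ≤ k →
        yc k = -(∑ i : Fin l, act (Amats i) (yc (k - l + (i : ℕ))))
          + act D (uc k) + ∑ i : Fin l, act (Bmats i) (uc (k - l + (i : ℕ))))
    (Bv : Matrix (Fin m) (Fin mv) ℝ)
    (Q : Matrix (Fin (N - l)) (Fin (N - l)) ℝ) (S : Matrix (Fin (N - l)) (Fin mv) ℝ)
    (R : Matrix (Fin mv) (Fin mv) ℝ) (hQ : IsNegDef Q) (hR : R.IsSymm)
    (u y : ℕ → Fin m → ℝ) (v : ℕ → Fin mv → ℝ)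
    -- the measured data is generated by the true system corrupted by the noise v:
    (hdata : ∀ k, l ≤ k → k < N →
      y k = -(∑ i : Fin l, (Amats i).mulVec (y (k - l + (i : ℕ))))
        + D.mulVec (u k) + (∑ i : Fin l, (Bmats i).mulVec (u (k - l + (i : ℕ))))
        + Bv.mulVec (v k))
    -- the noise matrix V* = (v_l ⋯ v_{N-1}) belongs to 𝒱:
    (hV : inNoiseSet Q S R (Matrix.of fun a (j : Fin (N - l)) => v (l + (j : ℕ)) a))
    (hinvQSR : IsUnit (QSRbar l N u y Q S R Bv).det)
    (γ ζ : ℝ) (hγ : 0 ≤ γ) :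
    ((∃ (P : Matrix (rindex l m) (rindex l m) ℝ) (μ : ℝ), P.IsSymm ∧ 0 ≤ μ ∧
        IsNegSemidef
          ((Gmat l m)ᵀ * PhiMat P ((-(γ ^ 2)) • (1 : Matrix (Fin m) (Fin m) ℝ)) 1 * Gmat l m
            - μ • (QSRbar l N u y Q S R Bv)⁻¹)) →
      maxGain (domInf A B C D) (output A B C D) ≤ ENNReal.ofReal γ) ∧
    ((∃ (P : Matrix (rindex l m) (rindex l m) ℝ) (μ : ℝ), P.IsSymm ∧ 0 ≤ μ ∧
        IsNegSemidef
          ((Gmat l m)ᵀ * PhiMat P ((ζ ^ 2) • (1 : Matrix (Fin m) (Fin m) ℝ)) (-1) * Gmat l m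
            - μ • (QSRbar l N u y Q S R Bv)⁻¹)) →
      ENNReal.ofReal ζ ≤ minGain (domInf A B C D) (output A B C D)) := by
  have hker (z) (hz : Fmat Amats Bmats D *ᵥ z = 0) :
      z ⬝ᵥ (QSRbar l N u y Q S R Bv)⁻¹ *ᵥ z ≤ 0 :=
    dotProduct_QSRbar_inv_mulVec_nonpos hQ hR (Fmat_mulVec_extState_of_data hdata) hV hinvQSR hz
  have hsumm {w} (hw : w ∈ domInf A B C D) :
      (Summable fun k => ‖w k‖ ^ 2) ∧ Summable fun k => ‖output A B C D w k‖ ^ 2 :=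
    ⟨(enorm2_ne_top_iff _).1 hw.1, (enorm2_ne_top_iff _).1 hw.2⟩
  constructor
  · rintro ⟨P, μ, -, hμ, hlmi⟩
    refine maxGain_le_ofReal fun w hw => ?_
    have := supply_tsum_nonpos hdiff hlmi hμ hker (c := -(γ ^ 2)) (d := 1)
      (dotProduct_smul_one_mulVec _) (fun x => by simp) (hsumm hw).1 (hsumm hw).2
    rw [ofReal_mul_enorm2 hγ (hsumm hw).1, enorm2_eq_ofReal_sqrt (hsumm hw).2]
    exact ENNReal.ofReal_le_ofReal (Real.sqrt_le_sqrt (by linarith))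
  · rintro ⟨P, μ, -, hμ, hlmi⟩
    refine ofReal_le_minGain (fun w hw => hw.1) fun w hw => ?_
    have := supply_tsum_nonpos hdiff hlmi hμ hker (c := |ζ| ^ 2) (d := -1)
      (fun x => by rw [sq_abs, dotProduct_smul_one_mulVec]) (fun x => by simp [neg_mulVec])
      (hsumm hw).1 (hsumm hw).2
    calc ENNReal.ofReal ζ * enorm2 w ≤ ENNReal.ofReal |ζ| * enorm2 w :=
          mul_le_mul_left (ENNReal.ofReal_le_ofReal (le_abs_self ζ)) _
      _ ≤ enorm2 (output A B C D w) := by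
          rw [ofReal_mul_enorm2 (abs_nonneg ζ) (hsumm hw).1, enorm2_eq_ofReal_sqrt (hsumm hw).2]
          exact ENNReal.ofReal_le_ofReal (Real.sqrt_le_sqrt (by linarith))

/-- Robust data-driven bounds on the gains of the ℓ₂ operator `T` from noisy
data, with symmetric (not necessarily PSD) storage matrix P. -/
theorem stmt17 {n m mv : ℕ} (hn : 1 ≤ n) (hm : 1 ≤ m) (hmv : 1 ≤ mv)
    (A : Matrix (Fin n) (Fin n) ℝ) (B : Matrix (Fin n) (Fin m) ℝ)
    (C : Matrix (Fin m) (Fin n) ℝ) (D : Matrix (Fin m) (Fin m) ℝ)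
    (l N : ℕ) (hl : 1 ≤ l) (hN : 1 ≤ N) (hlag : lag A C ≤ l)
    (Amats Bmats : Fin l → Matrix (Fin m) (Fin m) ℝ)
    -- the true system admits the difference-operator representation
    -- y_k = −A_l y_{k-1} − ⋯ − A_1 y_{k-l} + D u_k + B_l u_{k-1} + ⋯ + B_1 u_{k-l}:
    (hdiff : ∀ (x : ℕ → Evec n) (uc yc : ℕ → Evec m),
      (∀ k, x (k + 1) = act A (x k) + act B (uc k)) →
      (∀ k, yc k = act C (x k) + act D (uc k)) →
      ∀ k, l ≤ k →
        yc k = -(∑ i : Fin l, act (Amats i) (yc (k - l + (i : ℕ))))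
          + act D (uc k) + ∑ i : Fin l, act (Bmats i) (uc (k - l + (i : ℕ))))
    (Bv : Matrix (Fin m) (Fin mv) ℝ)
    (Q : Matrix (Fin (N - l)) (Fin (N - l)) ℝ) (S : Matrix (Fin (N - l)) (Fin mv) ℝ)
    (R : Matrix (Fin mv) (Fin mv) ℝ) (hQ : IsNegDef Q) (hR : R.IsSymm)
    (u y : ℕ → Fin m → ℝ) (v : ℕ → Fin mv → ℝ)
    -- the measured data is generated by the true system corrupted by the noise v:
    (hdata : ∀ k, l ≤ k → k < N →
      y k = -(∑ i : Fin l, (Amats i).mulVec (y (k - l + (i : ℕ))))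
        + D.mulVec (u k) + (∑ i : Fin l, (Bmats i).mulVec (u (k - l + (i : ℕ))))
        + Bv.mulVec (v k))
    -- the noise matrix V* = (v_l ⋯ v_{N-1}) belongs to 𝒱:
    (hV : inNoiseSet Q S R (Matrix.of fun a (j : Fin (N - l)) => v (l + (j : ℕ)) a))
    (hinvQSR : IsUnit (QSRbar l N u y Q S R Bv).det)
    (γ ζ : ℝ) (hγ : 0 ≤ γ) :
    ((∃ (P : Matrix (rindex l m) (rindex l m) ℝ) (μ : ℝ), P.IsSymm ∧ 0 ≤ μ ∧
        IsNegSemidef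
          ((Gmat l m)ᵀ * PhiMat P ((-(γ ^ 2)) • (1 : Matrix (Fin m) (Fin m) ℝ)) 1 * Gmat l m
            - μ • (QSRbar l N u y Q S R Bv)⁻¹)) →
      maxGain (domInf A B C D) (output A B C D) ≤ ENNReal.ofReal γ) ∧
    ((∃ (P : Matrix (rindex l m) (rindex l m) ℝ) (μ : ℝ), P.IsSymm ∧ 0 ≤ μ ∧
        IsNegSemidef
          ((Gmat l m)ᵀ * PhiMat P ((ζ ^ 2) • (1 : Matrix (Fin m) (Fin m) ℝ)) (-1) * Gmat l m
            - μ • (QSRbar l N u y Q S R Bv)⁻¹)) →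
      ENNReal.ofReal ζ ≤ minGain (domInf A B C D) (output A B C D)) :=
  stmt17_general A B C D l N Amats Bmats hdiff Bv Q S R hQ hR u y v hdata hV hinvQSR γ ζ hγ

end
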